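/- Let T be a self-adjoint contraction (‖T‖ ≤ 1) on a complex Hilbert space H, let Ω be a unit vector with T Ω = Ω, let P_Ω be the orthogonal projection onto ℂΩ, and let D be a dense linear subspace of H. Then the following are equivalent: (a) there exists δ > 0 such that e^{δ k} (⟨f, T^k g⟩ − ⟨f, Ω⟩⟨Ω, g⟩) → 0 as k → ∞ for all f, g ∈ D; (b) there exists 0 ≤ α < 1 such that the spectrum of T − P_Ω is contained in [−α, α] (equivalently, ‖T − P_Ω‖ < 1). -/

import Mathlib

/-!
Because `T` is self-adjoint and fixes `Ω`, `P_Ω` absorbs `T` on both sides, so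
`(T - P_Ω) ^ k = T ^ k - P_Ω` for `k ≥ 1` and the correlation is `⟪f, S ^ k g⟫` with
`S = T - P_Ω` self-adjoint. For self-adjoint `S` the norm is the spectral radius, so the spectral
condition says `‖S‖ ≤ α`, which gives decay at every rate `e ^ δ < 1 / α`.
Conversely `k ↦ ‖S ^ k x‖` is log-convex, since `‖S ^ (k + 1) x‖ ^ 2 = ⟪S ^ k x, S ^ (k + 2) x⟫`,
hence `‖S ^ k x‖ ≥ ‖x‖ (‖S x‖ / ‖x‖) ^ k`. Decay of `⟪x, S ^ (2 k) x⟫ = ‖S ^ k x‖ ^ 2` like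
`e ^ (-2 δ k)` therefore forces `‖S x‖ ≤ e ^ (-δ) ‖x‖` on the dense subspace `D`, hence on `H`.
-/

open ContinuousLinearMap Filter Topology
open scoped ComplexInnerProductSpace

theorem mul_pow_le_pow_mul_of_sq_le_mul {a : ℕ → ℝ} (ha : ∀ n, 0 ≤ a n)
    (hconv : ∀ n, a (n + 1) ^ 2 ≤ a n * a (n + 2)) (n : ℕ) :
    a 0 * a 1 ^ n ≤ a 0 ^ n * a n := by
  have hratio : ∀ n, a 1 * a n ≤ a 0 * a (n + 1) := by
    intro n
    induction n with
    | zero => rw [mul_comm]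
    | succ n ih =>
      rcases (ha (n + 1)).eq_or_lt with hzero | hpos
      · rw [← hzero, mul_zero]
        exact mul_nonneg (ha 0) (ha _)
      · refine le_of_mul_le_mul_left ?_ hpos
        calc a (n + 1) * (a 1 * a (n + 1)) = a 1 * a (n + 1) ^ 2 := by ring
          _ ≤ a 1 * (a n * a (n + 2)) := mul_le_mul_of_nonneg_left (hconv n) (ha 1)
          _ = (a 1 * a n) * a (n + 2) := by ring
          _ ≤ (a 0 * a (n + 1)) * a (n + 2) := mul_le_mul_of_nonneg_right ih (ha _)
          _ = a (n + 1) * (a 0 * a (n + 1 + 1)) := by ring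
  induction n with
  | zero => simp [mul_comm]
  | succ n ih =>
    calc a 0 * a 1 ^ (n + 1) = a 1 * (a 0 * a 1 ^ n) := by ring
      _ ≤ a 1 * (a 0 ^ n * a n) := mul_le_mul_of_nonneg_left ih (ha 1)
      _ = a 0 ^ n * (a 1 * a n) := by ring
      _ ≤ a 0 ^ n * (a 0 * a (n + 1)) :=
        mul_le_mul_of_nonneg_left (hratio n) (pow_nonneg (ha 0) n)
      _ = a 0 ^ (n + 1) * a (n + 1) := by ring

theorem le_of_eventually_mul_pow_le_pow {a b c : ℝ} (ha : 0 < a) (hc : 0 ≤ c)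
    (h : ∀ᶠ n : ℕ in atTop, a * b ^ n ≤ c ^ n) : b ≤ c := by
  by_contra! hcb
  have hb : 0 < b := hc.trans_lt hcb
  have hlim : Tendsto (fun n : ℕ => (c / b) ^ n) atTop (𝓝 0) :=
    tendsto_pow_atTop_nhds_zero_of_lt_one (div_nonneg hc hb.le) ((div_lt_one hb).mpr hcb)
  refine ha.not_ge (ge_of_tendsto hlim ?_)
  filter_upwards [h] with n hn
  rwa [div_pow, le_div_iff₀ (pow_pos hb n)]

theorem exists_pos_exp_mul_lt_one {α : ℝ} (hα : α < 1) : ∃ δ > 0, Real.exp δ * α < 1 := by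
  have hlim : Tendsto (fun δ => Real.exp δ * α) (𝓝[>] 0) (𝓝 α) := by
    simpa using ((Real.continuous_exp.tendsto 0).mul_const α).mono_left nhdsWithin_le_nhds
  exact ((hlim.eventually (gt_mem_nhds hα)).and self_mem_nhdsWithin).exists.imp
    fun δ h => ⟨h.2, h.1⟩

theorem IsIdempotentElem.sub_pow_succ_of_mul_eq {R : Type*} [Ring R] {t p : R}
    (hp : IsIdempotentElem p) (htp : t * p = p) (hpt : p * t = p) (n : ℕ) :
    (t - p) ^ (n + 1) = t ^ (n + 1) - p := by
  have hpow : ∀ k : ℕ, p * t ^ k = p := fun k => by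
    induction k with
    | zero => rw [pow_zero, mul_one]
    | succ k ih => rw [pow_succ, ← mul_assoc, ih, hpt]
  induction n with
  | zero => simp
  | succ n ih =>
    rw [pow_succ', ih, sub_mul, mul_sub, mul_sub, ← pow_succ', htp, hpow, hp.eq]
    abel

theorem ContinuousLinearMap.norm_pow_apply_le {𝕜 E : Type*} [NontriviallyNormedField 𝕜]
    [SeminormedAddCommGroup E] [NormedSpace 𝕜 E] (A : E →L[𝕜] E) (k : ℕ) (x : E) :
    ‖(A ^ k) x‖ ≤ ‖A‖ ^ k * ‖x‖ := by
  induction k with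
  | zero => simp
  | succ k ih =>
    calc ‖(A ^ (k + 1)) x‖ = ‖A ((A ^ k) x)‖ := by rw [pow_succ', mul_apply_eq_comp]
      _ ≤ ‖A‖ * (‖A‖ ^ k * ‖x‖) := A.le_opNorm_of_le ih
      _ = ‖A‖ ^ (k + 1) * ‖x‖ := by ring

theorem ContinuousLinearMap.opNorm_le_of_dense {𝕜 E F : Type*} [NontriviallyNormedField 𝕜]
    [SeminormedAddCommGroup E] [SeminormedAddCommGroup F] [NormedSpace 𝕜 E] [NormedSpace 𝕜 F]
    (A : E →L[𝕜] F) {D : Set E} (hD : Dense D) {M : ℝ} (hM : 0 ≤ M)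
    (h : ∀ x ∈ D, ‖A x‖ ≤ M * ‖x‖) : ‖A‖ ≤ M :=
  A.opNorm_le_bound hM fun x => hD.induction h (isClosed_le (by fun_prop) (by fun_prop)) x

theorem IsSelfAdjoint.norm_le_iff_spectrum_subset {A : Type*} [CStarAlgebra A] {a : A}
    (ha : IsSelfAdjoint a) {α : ℝ} (hα : 0 ≤ α) :
    ‖a‖ ≤ α ↔ spectrum ℂ a ⊆ {z : ℂ | z.im = 0 ∧ -α ≤ z.re ∧ z.re ≤ α} := by
  have hre : ∀ z ∈ spectrum ℂ a, ‖z‖ = |z.re| := fun z hz => by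
    rw [ha.mem_spectrum_eq_re hz, Complex.norm_real, Real.norm_eq_abs, Complex.ofReal_re]
  lift α to NNReal using hα
  rw [← coe_nnnorm, NNReal.coe_le_coe, ← ENNReal.coe_le_coe, ← ha.spectralRadius_eq_nnnorm,
    spectralRadius, iSup₂_le_iff]
  refine forall₂_congr fun z hz => ?_
  rw [ENNReal.coe_le_coe, ← NNReal.coe_le_coe, coe_nnnorm, hre z hz, abs_le]
  simp [ha.im_eq_zero_of_mem_spectrum hz]

section InnerProductSpace

variable {𝕜 E : Type*} [RCLike 𝕜] [NormedAddCommGroup E] [InnerProductSpace 𝕜 E]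
  {Ω : E} {P : E →L[𝕜] E}

theorem norm_sq_eq_norm_inner_self (x : E) : ‖x‖ ^ 2 = ‖inner 𝕜 x x‖ := by
  rw [inner_self_eq_norm_sq_to_K, norm_pow, RCLike.norm_ofReal, abs_norm]

theorem tendsto_exp_mul_inner_pow_apply {A : E →L[𝕜] E} {δ : ℝ} (h : Real.exp δ * ‖A‖ < 1)
    (f g : E) :
    Tendsto (fun k : ℕ => (Real.exp (δ * k) : 𝕜) * inner 𝕜 f ((A ^ k) g)) atTop (𝓝 0) := by
  have hbound : ∀ k : ℕ, ‖(Real.exp (δ * k) : 𝕜) * inner 𝕜 f ((A ^ k) g)‖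
      ≤ ‖f‖ * ‖g‖ * (Real.exp δ * ‖A‖) ^ k := fun k =>
    calc ‖(Real.exp (δ * k) : 𝕜) * inner 𝕜 f ((A ^ k) g)‖
        ≤ Real.exp δ ^ k * (‖f‖ * (‖A‖ ^ k * ‖g‖)) := by
          rw [norm_mul, RCLike.norm_ofReal, Real.abs_exp, mul_comm δ, Real.exp_nat_mul]
          gcongr
          exact (norm_inner_le_norm _ _).trans (by gcongr; exact A.norm_pow_apply_le k g)
      _ = ‖f‖ * ‖g‖ * (Real.exp δ * ‖A‖) ^ k := by ring
  refine squeeze_zero_norm hbound ?_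
  simpa using (tendsto_pow_atTop_nhds_zero_of_lt_one (by positivity) h).const_mul (‖f‖ * ‖g‖)

theorem isIdempotentElem_of_apply_eq_inner_smul (hP : ∀ f, P f = inner 𝕜 Ω f • Ω)
    (hΩ : ‖Ω‖ = 1) : IsIdempotentElem P := by
  ext f
  simp [hP, mul_apply_eq_comp, inner_smul_right, inner_self_eq_norm_sq_to_K, hΩ]

theorem mul_eq_right_of_apply_eq_inner_smul (hP : ∀ f, P f = inner 𝕜 Ω f • Ω)
    {T : E →L[𝕜] E} (hfix : T Ω = Ω) : T * P = P := by
  ext f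
  simp [hP, mul_apply_eq_comp, hfix]

variable [CompleteSpace E] {S : E →L[𝕜] E}

theorem isSelfAdjoint_of_apply_eq_inner_smul (hP : ∀ f, P f = inner 𝕜 Ω f • Ω) :
    IsSelfAdjoint P := by
  rw [isSelfAdjoint_iff', eq_comm, eq_adjoint_iff]
  intro x y
  simp only [hP, inner_smul_left, inner_smul_right, inner_conj_symm]
  ring

theorem mul_eq_left_of_apply_eq_inner_smul (hP : ∀ f, P f = inner 𝕜 Ω f • Ω)
    {T : E →L[𝕜] E} (hT : IsSelfAdjoint T) (hfix : T Ω = Ω) : P * T = P := by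
  have h : ∀ f, inner 𝕜 Ω (T f) = inner 𝕜 Ω f := fun f =>
    calc inner 𝕜 Ω (T f) = inner 𝕜 (T Ω) f := (hT.isSymmetric Ω f).symm
      _ = inner 𝕜 Ω f := by rw [hfix]
  ext f
  simp [hP, mul_apply_eq_comp, h]

theorem IsSelfAdjoint.inner_pow_apply_pow_apply (hS : IsSelfAdjoint S) (m n : ℕ) (x y : E) :
    inner 𝕜 ((S ^ m) x) ((S ^ n) y) = inner 𝕜 x ((S ^ (m + n)) y) := by
  rw [pow_add, mul_apply_eq_comp]
  exact (hS.pow m).isSymmetric _ _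

theorem IsSelfAdjoint.norm_pow_succ_apply_sq_le (hS : IsSelfAdjoint S) (x : E) (n : ℕ) :
    ‖(S ^ (n + 1)) x‖ ^ 2 ≤ ‖(S ^ n) x‖ * ‖(S ^ (n + 2)) x‖ := by
  have h : inner 𝕜 ((S ^ (n + 1)) x) ((S ^ (n + 1)) x)
      = inner 𝕜 ((S ^ n) x) ((S ^ (n + 2)) x) := by
    rw [hS.inner_pow_apply_pow_apply, hS.inner_pow_apply_pow_apply]
    ring_nf
  rw [norm_sq_eq_norm_inner_self (𝕜 := 𝕜), h]
  exact norm_inner_le_norm _ _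

theorem IsSelfAdjoint.norm_mul_norm_apply_pow_le (hS : IsSelfAdjoint S) (x : E) (n : ℕ) :
    ‖x‖ * ‖S x‖ ^ n ≤ ‖x‖ ^ n * ‖(S ^ n) x‖ := by
  simpa using mul_pow_le_pow_mul_of_sq_le_mul (a := fun n => ‖(S ^ n) x‖)
    (fun _ => norm_nonneg _) (hS.norm_pow_succ_apply_sq_le x) n

theorem IsSelfAdjoint.norm_apply_le_of_eventually_norm_pow_apply_le (hS : IsSelfAdjoint S)
    {x : E} {q : ℝ} (hq : 0 ≤ q) (h : ∀ᶠ n : ℕ in atTop, ‖(S ^ n) x‖ ≤ q ^ n) :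
    ‖S x‖ ≤ q * ‖x‖ := by
  rcases eq_or_ne x 0 with rfl | hx
  · simp
  refine le_of_eventually_mul_pow_le_pow (norm_pos_iff.mpr hx) (by positivity) ?_
  filter_upwards [h] with n hn
  calc ‖x‖ * ‖S x‖ ^ n ≤ ‖x‖ ^ n * ‖(S ^ n) x‖ := hS.norm_mul_norm_apply_pow_le x n
    _ ≤ ‖x‖ ^ n * q ^ n := by gcongr
    _ = (q * ‖x‖) ^ n := by ring

theorem IsSelfAdjoint.eventually_norm_pow_apply_le_of_tendsto (hS : IsSelfAdjoint S) {x : E}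
    {δ : ℝ}
    (h : Tendsto (fun k : ℕ => (Real.exp (δ * k) : 𝕜) * inner 𝕜 x ((S ^ k) x)) atTop (𝓝 0)) :
    ∀ᶠ n : ℕ in atTop, ‖(S ^ n) x‖ ≤ Real.exp (-δ) ^ n := by
  have heven := (h.comp (tendsto_id.const_mul_atTop' two_pos)).norm
  filter_upwards [heven.eventually (ge_mem_nhds (show ‖(0 : 𝕜)‖ < 1 by simp))] with n hn
  simp only [Function.comp_apply, id, norm_mul, RCLike.norm_ofReal, Real.abs_exp] at hn
  have hsq : ‖(S ^ n) x‖ ^ 2 ≤ (Real.exp (-δ) ^ n) ^ 2 :=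
    calc ‖(S ^ n) x‖ ^ 2 = ‖inner 𝕜 x ((S ^ (2 * n)) x)‖ := by
          rw [norm_sq_eq_norm_inner_self (𝕜 := 𝕜), hS.inner_pow_apply_pow_apply, two_mul]
      _ ≤ (Real.exp (δ * (2 * n : ℕ)))⁻¹ := by
        rw [← one_div, le_div_iff₀' (Real.exp_pos _)]
        exact hn
      _ = (Real.exp (-δ) ^ n) ^ 2 := by
        rw [← Real.exp_neg, ← pow_mul, ← Real.exp_nat_mul]
        push_cast
        ring_nf
  exact (pow_le_pow_iff_left₀ (norm_nonneg _) (by positivity) two_ne_zero).mp hsq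

end InnerProductSpace

theorem exponential_decay_iff_spectral_gap_general
    {H : Type*} [NormedAddCommGroup H] [InnerProductSpace ℂ H] [CompleteSpace H]
    (T : H →L[ℂ] H) (hT : IsSelfAdjoint T)
    (Ω : H) (hΩ : ‖Ω‖ = 1) (hfix : T Ω = Ω)
    (Pom : H →L[ℂ] H) (hPom : ∀ f : H, Pom f = ⟪Ω, f⟫ • Ω)
    (D : Submodule ℂ H) (hD : Dense (D : Set H)) :
    (∃ δ : ℝ, 0 < δ ∧ ∀ f ∈ D, ∀ g ∈ D,
        Filter.Tendsto
          (fun k : ℕ => (Real.exp (δ * k) : ℂ) * (⟪f, (T ^ k) g⟫ - ⟪f, Ω⟫ * ⟪Ω, g⟫))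
          Filter.atTop (nhds 0)) ↔
    (∃ α : ℝ, 0 ≤ α ∧ α < 1 ∧
        spectrum ℂ (T - Pom) ⊆ {z : ℂ | z.im = 0 ∧ -α ≤ z.re ∧ z.re ≤ α}) := by
  have hS : IsSelfAdjoint (T - Pom) := hT.sub (isSelfAdjoint_of_apply_eq_inner_smul hPom)
  have hpow : ∀ n : ℕ, (T - Pom) ^ (n + 1) = T ^ (n + 1) - Pom :=
    (isIdempotentElem_of_apply_eq_inner_smul hPom hΩ).sub_pow_succ_of_mul_eq
      (mul_eq_right_of_apply_eq_inner_smul hPom hfix)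
      (mul_eq_left_of_apply_eq_inner_smul hPom hT hfix)
  have hcorr : ∀ (δ : ℝ) (f g : H),
      Tendsto (fun k : ℕ => (Real.exp (δ * k) : ℂ) * (⟪f, (T ^ k) g⟫ - ⟪f, Ω⟫ * ⟪Ω, g⟫))
        atTop (𝓝 0) ↔
      Tendsto (fun k : ℕ => (Real.exp (δ * k) : ℂ) * ⟪f, ((T - Pom) ^ k) g⟫) atTop (𝓝 0) := by
    refine fun δ f g => tendsto_congr' ?_
    filter_upwards [eventually_ge_atTop 1] with k hk
    obtain ⟨n, rfl⟩ := Nat.exists_eq_add_of_le' hk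
    rw [hpow, sub_apply, inner_sub_right, hPom, inner_smul_right, mul_comm ⟪Ω, g⟫]
  simp only [hcorr]
  constructor
  · rintro ⟨δ, hδ, hdecay⟩
    have hnorm : ‖T - Pom‖ ≤ Real.exp (-δ) :=
      (T - Pom).opNorm_le_of_dense hD (Real.exp_pos _).le fun x hx =>
        hS.norm_apply_le_of_eventually_norm_pow_apply_le (Real.exp_pos _).le
          (hS.eventually_norm_pow_apply_le_of_tendsto (hdecay x hx x hx))
    exact ⟨_, (Real.exp_pos _).le, Real.exp_lt_one_iff.mpr (neg_lt_zero.mpr hδ),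
      (hS.norm_le_iff_spectrum_subset (Real.exp_pos _).le).mp hnorm⟩
  · rintro ⟨α, hα0, hα1, hspec⟩
    have hnorm : ‖T - Pom‖ ≤ α := (hS.norm_le_iff_spectrum_subset hα0).mpr hspec
    obtain ⟨δ, hδ, hδα⟩ := exists_pos_exp_mul_lt_one hα1
    exact ⟨δ, hδ, fun f _ g _ => tendsto_exp_mul_inner_pow_apply
      ((mul_le_mul_of_nonneg_left hnorm (Real.exp_pos δ).le).trans_lt hδα) f g⟩

/-- Let `T` be a self-adjoint contraction on a complex Hilbert space `H`,
`Ω` a unit vector with `T Ω = Ω`, `P_Ω` the orthogonal projection onto `ℂ Ω`, and `D` a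
dense subspace. Then the correlation functions `⟨f, Tᵏ g⟩ − ⟨f, Ω⟩⟨Ω, g⟩` (for `f, g ∈ D`)
decay exponentially iff the spectrum of `T − P_Ω` is contained in some `[−α, α]` with
`α < 1`. -/
theorem exponential_decay_iff_spectral_gap
    {H : Type*} [NormedAddCommGroup H] [InnerProductSpace ℂ H] [CompleteSpace H]
    (T : H →L[ℂ] H) (hT : IsSelfAdjoint T) (hTnorm : ‖T‖ ≤ 1)
    (Ω : H) (hΩ : ‖Ω‖ = 1) (hfix : T Ω = Ω)
    (Pom : H →L[ℂ] H) (hPom : ∀ f : H, Pom f = ⟪Ω, f⟫ • Ω)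
    (D : Submodule ℂ H) (hD : Dense (D : Set H)) :
    (∃ δ : ℝ, 0 < δ ∧ ∀ f ∈ D, ∀ g ∈ D,
        Filter.Tendsto
          (fun k : ℕ => (Real.exp (δ * k) : ℂ) * (⟪f, (T ^ k) g⟫ - ⟪f, Ω⟫ * ⟪Ω, g⟫))
          Filter.atTop (nhds 0)) ↔
    (∃ α : ℝ, 0 ≤ α ∧ α < 1 ∧
        spectrum ℂ (T - Pom) ⊆ {z : ℂ | z.im = 0 ∧ -α ≤ z.re ∧ z.re ≤ α}) :=
  exponential_decay_iff_spectral_gap_general T hT Ω hΩ hfix Pom hPom D hD
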